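/- Let G be a simple loony endgame with cv(G) ≥ 2. Then v(G) = cv(G). -/
import Mathlib


/-- A component of a dots-and-boxes endgame: a chain or a loop, with an integer length. -/
inductive Comp : Type
  | chain (c : ℤ) : Comp
  | loop (l : ℤ) : Comp
  deriving DecidableEq

/-- The length (number of boxes) of a component. -/
def Comp.len : Comp → ℤ
  | .chain c => c
  | .loop l => l

/-- A simple loony endgame: a multiset of chains of length ≥ 3 and loops of even length ≥ 4. -/
def IsSimpleLoony (G : Multiset Comp) : Prop :=
  ∀ p ∈ G, match p with
    | .chain c => 3 ≤ c
    | .loop l => 4 ≤ l ∧ Even l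

/-- Fuel-indexed value function. -/
noncomputable def vAux : ℕ → Multiset Comp → ℤ
  | 0, _ => 0
  | n + 1, G =>
    if G = 0 then 0
    else sInf { x : ℤ | ∃ p ∈ G,
      x = match p with
        | Comp.chain c => c - 2 + |vAux n (G.erase p) - 2|
        | Comp.loop l => l - 4 + |vAux n (G.erase p) - 4| }

/-- The value of a simple loony endgame: 0 on the empty game; on a nonempty game, the
minimum over components of `c - 2 + |v(G∖{c}) - 2|` for a chain of length `c` and
`ℓ - 4 + |v(G∖{ℓ}) - 4|` for a loop of length `ℓ`. -/
noncomputable def v (G : Multiset Comp) : ℤ := vAux (Multiset.card G) G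

/-- The fully controlled value: Σ_chains (c - 4) + Σ_loops (ℓ - 8). -/
def fcv (G : Multiset Comp) : ℤ :=
  (G.map (fun p => match p with
    | Comp.chain c => c - 4
    | Comp.loop l => l - 8)).sum

/-- The terminal bonus. -/
noncomputable def tb (G : Multiset Comp) : ℤ :=
  open Classical in
  if G = 0 then 0
  else if (∃ c, 4 ≤ c ∧ Comp.chain c ∈ G) ∨ (∀ l, Comp.loop l ∉ G) then 4
  else if ∀ c, Comp.chain c ∉ G then 8
  else 6

/-- The controlled value. -/
noncomputable def cv (G : Multiset Comp) : ℤ := fcv G + tb G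

def wgt : Comp → ℤ
  | .chain c => c - 4
  | .loop l => l - 8

lemma fcv_eq (G : Multiset Comp) : fcv G = (G.map wgt).sum := by
  unfold fcv
  congr 1

lemma fcv_zero : fcv 0 = 0 := rfl

lemma fcv_cons (p : Comp) (G : Multiset Comp) : fcv (p ::ₘ G) = wgt p + fcv G := by
  rw [fcv_eq, fcv_eq, Multiset.map_cons, Multiset.sum_cons]

lemma fcv_erase {p : Comp} {G : Multiset Comp} (hp : p ∈ G) :
    fcv G = wgt p + fcv (G.erase p) := by
  conv_lhs => rw [← Multiset.cons_erase hp]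
  exact fcv_cons _ _

lemma fcv_nonneg {G : Multiset Comp} (h : ∀ q ∈ G, 0 ≤ wgt q) : 0 ≤ fcv G := by
  rw [fcv_eq]
  apply Multiset.sum_nonneg
  intro x hx
  obtain ⟨q, hq, rfl⟩ := Multiset.mem_map.mp hx
  exact h q hq

lemma fcv_allthree : ∀ (G : Multiset Comp), (∀ q ∈ G, q = Comp.chain 3) →
    fcv G = -(Multiset.card G) := by
  intro G
  induction G using Multiset.induction_on with
  | empty => intro _; simp [fcv_zero]
  | cons p s ih =>
    intro h
    have hp : p = Comp.chain 3 := h p (Multiset.mem_cons_self _ _)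
    rw [fcv_cons, ih (fun q hq => h q (Multiset.mem_cons_of_mem hq)), hp]
    simp [wgt]

lemma v_zero : v 0 = 0 := rfl

lemma vAux_congr : ∀ n m (G : Multiset Comp), Multiset.card G ≤ n → Multiset.card G ≤ m →
    vAux n G = vAux m G := by
  intro n
  induction n with
  | zero =>
    intro m G hn _
    have hG : G = 0 := Multiset.card_eq_zero.mp (Nat.le_zero.mp hn)
    subst hG
    cases m <;> simp [vAux]
  | succ n ih =>
    intro m G hn hm
    rcases m with _ | m
    · have hG : G = 0 := Multiset.card_eq_zero.mp (Nat.le_zero.mp hm)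
      subst hG
      simp [vAux]
    · by_cases hG : G = 0
      · simp [vAux, hG]
      · simp only [vAux, if_neg hG]
        congr 1
        have hpos : 0 < Multiset.card G := Multiset.card_pos.mpr hG
        ext x
        simp only [Set.mem_setOf_eq]
        constructor
        · rintro ⟨p, hp, rfl⟩
          refine ⟨p, hp, ?_⟩
          have hc : Multiset.card (G.erase p) = Multiset.card G - 1 :=
            Multiset.card_erase_of_mem hp
          have key : vAux n (G.erase p) = vAux m (G.erase p) :=
            ih m _ (by omega) (by omega)
          cases p <;> simp only [key]
        · rintro ⟨p, hp, rfl⟩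
          refine ⟨p, hp, ?_⟩
          have hc : Multiset.card (G.erase p) = Multiset.card G - 1 :=
            Multiset.card_erase_of_mem hp
          have key : vAux n (G.erase p) = vAux m (G.erase p) :=
            ih m _ (by omega) (by omega)
          cases p <;> simp only [key]

noncomputable def opt (G : Multiset Comp) : Comp → ℤ
  | .chain c => c - 2 + |v (G.erase (Comp.chain c)) - 2|
  | .loop l => l - 4 + |v (G.erase (Comp.loop l)) - 4|

lemma opt_chain (G : Multiset Comp) (c : ℤ) :
    opt G (Comp.chain c) = c - 2 + |v (G.erase (Comp.chain c)) - 2| := rfl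

lemma opt_loop (G : Multiset Comp) (l : ℤ) :
    opt G (Comp.loop l) = l - 4 + |v (G.erase (Comp.loop l)) - 4| := rfl

lemma v_spec {G : Multiset Comp} (hG : G ≠ 0) :
    v G = sInf (opt G '' {p | p ∈ G}) := by
  have hpos : 0 < Multiset.card G := Multiset.card_pos.mpr hG
  obtain ⟨k, hk⟩ : ∃ k, Multiset.card G = k + 1 := ⟨Multiset.card G - 1, by omega⟩
  have hmatch : ∀ p ∈ G,
      (match p with
        | Comp.chain c => c - 2 + |vAux k (G.erase p) - 2|
        | Comp.loop l => l - 4 + |vAux k (G.erase p) - 4|) = opt G p := by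
    intro p hp
    have hc : Multiset.card (G.erase p) = Multiset.card G - 1 :=
      Multiset.card_erase_of_mem hp
    have key : vAux k (G.erase p) = v (G.erase p) :=
      vAux_congr k (Multiset.card (G.erase p)) _ (by omega) le_rfl
    cases p <;> simp only [key, opt]
  show vAux (Multiset.card G) G = _
  rw [hk]
  simp only [vAux, if_neg hG]
  congr 1
  ext x
  simp only [Set.mem_setOf_eq, Set.mem_image]
  constructor
  · rintro ⟨p, hp, rfl⟩
    exact ⟨p, hp, (hmatch p hp).symm⟩
  · rintro ⟨p, hp, rfl⟩
    exact ⟨p, hp, (hmatch p hp).symm⟩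

lemma bdd_opt (G : Multiset Comp) : BddBelow (opt G '' {p | p ∈ G}) := by
  apply Set.Finite.bddBelow
  apply Set.Finite.image
  exact Set.Finite.ofFinset G.toFinset (by simp [Multiset.mem_toFinset])

lemma v_le_opt {G : Multiset Comp} {p : Comp} (hp : p ∈ G) : v G ≤ opt G p := by
  have hG : G ≠ 0 := by rintro rfl; simp at hp
  rw [v_spec hG]
  exact csInf_le (bdd_opt G) ⟨p, hp, rfl⟩

lemma le_v {G : Multiset Comp} {b : ℤ} (hG : G ≠ 0) (h : ∀ p ∈ G, b ≤ opt G p) :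
    b ≤ v G := by
  rw [v_spec hG]
  apply le_csInf
  · obtain ⟨p, hp⟩ := Multiset.exists_mem_of_ne_zero hG
    exact ⟨_, p, hp, rfl⟩
  · rintro x ⟨p, hp, rfl⟩
    exact h p hp

/- ===== tb lemmas ===== -/

lemma tb_four {G : Multiset Comp} (hG : G ≠ 0)
    (h : (∃ c, 4 ≤ c ∧ Comp.chain c ∈ G) ∨ (∀ l, Comp.loop l ∉ G)) : tb G = 4 := by
  simp only [tb]
  rw [if_neg hG, if_pos h]

lemma tb_eight {G : Multiset Comp} (hG : G ≠ 0)
    (h1 : ¬((∃ c, 4 ≤ c ∧ Comp.chain c ∈ G) ∨ (∀ l, Comp.loop l ∉ G)))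
    (h3 : ∀ c, Comp.chain c ∉ G) : tb G = 8 := by
  simp only [tb]
  rw [if_neg hG, if_neg h1, if_pos h3]

lemma tb_six {G : Multiset Comp} (hG : G ≠ 0)
    (h1 : ¬((∃ c, 4 ≤ c ∧ Comp.chain c ∈ G) ∨ (∀ l, Comp.loop l ∉ G)))
    (h3 : ¬(∀ c, Comp.chain c ∉ G)) : tb G = 6 := by
  simp only [tb]
  rw [if_neg hG, if_neg h1, if_neg h3]

lemma tb_zero : tb 0 = 0 := by simp [tb]

lemma tb_ge_four {G : Multiset Comp} (hG : G ≠ 0) : 4 ≤ tb G := by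
  by_cases h1 : (∃ c, 4 ≤ c ∧ Comp.chain c ∈ G) ∨ (∀ l, Comp.loop l ∉ G)
  · rw [tb_four hG h1]
  · by_cases h3 : ∀ c, Comp.chain c ∉ G
    · rw [tb_eight hG h1 h3]; norm_num
    · rw [tb_six hG h1 h3]; norm_num

/-- tb does not increase when removing a chain (if the rest is nonempty). -/
lemma tb_erase_chain {G : Multiset Comp} {c : ℤ} (hp : Comp.chain c ∈ G)
    (hH : G.erase (Comp.chain c) ≠ 0) : tb G ≤ tb (G.erase (Comp.chain c)) := by
  set H := G.erase (Comp.chain c) with hHdef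
  by_cases h1 : (∃ c', 4 ≤ c' ∧ Comp.chain c' ∈ G) ∨ (∀ l, Comp.loop l ∉ G)
  · rw [tb_four (by rintro rfl; simp at hp) h1]
    exact tb_ge_four hH
  · push_neg at h1
    obtain ⟨h14, l0, hl0⟩ := h1
    have h3 : ¬(∀ c', Comp.chain c' ∉ G) := by push_neg; exact ⟨c, hp⟩
    rw [tb_six (by rintro rfl; simp at hp) (by push_neg; exact ⟨h14, l0, hl0⟩) h3]
    have h1H : ¬((∃ c', 4 ≤ c' ∧ Comp.chain c' ∈ H) ∨ (∀ l, Comp.loop l ∉ H)) := by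
      push_neg
      constructor
      · intro c' hc' hmem
        exact h14 c' hc' (Multiset.mem_of_mem_erase hmem)
      · exact ⟨l0, (Multiset.mem_erase_of_ne (by simp)).mpr hl0⟩
    by_cases h3H : ∀ c', Comp.chain c' ∉ H
    · rw [tb_eight hH h1H h3H]; norm_num
    · rw [tb_six hH h1H h3H]

/- ===== all-3-chain games ===== -/

lemma v_allthree : ∀ n (G : Multiset Comp), Multiset.card G ≤ n →
    (∀ q ∈ G, q = Comp.chain 3) → G ≠ 0 → 1 ≤ v G ∧ v G ≤ 3 := by
  intro n
  induction n with
  | zero =>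
    intro G hn _ hne
    exact absurd (Multiset.card_eq_zero.mp (Nat.le_zero.mp hn)) hne
  | succ n ih =>
    intro G hcard hall hne
    constructor
    · apply le_v hne
      intro p hp
      rcases hall p hp with rfl
      rw [opt_chain]
      have := abs_nonneg (v (G.erase (Comp.chain 3)) - 2)
      linarith
    · obtain ⟨p, hp⟩ := Multiset.exists_mem_of_ne_zero hne
      rcases hall p hp with rfl
      have h := v_le_opt hp
      rw [opt_chain] at h
      by_cases hH : G.erase (Comp.chain 3) = 0
      · rw [hH, v_zero] at h
        norm_num at h
        linarith
      · have hsub : ∀ q ∈ G.erase (Comp.chain 3), q = Comp.chain 3 :=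
          fun q hq => hall q (Multiset.mem_of_mem_erase hq)
        have hc : Multiset.card (G.erase (Comp.chain 3)) = Multiset.card G - 1 :=
          Multiset.card_erase_of_mem hp
        have hpos : 0 < Multiset.card G := Multiset.card_pos.mpr hne
        obtain ⟨h1, h2⟩ := ih _ (by omega) hsub hH
        have habs : |v (G.erase (Comp.chain 3)) - 2| ≤ 1 :=
          abs_le.mpr ⟨by linarith, by linarith⟩
        linarith

/- ===== lower bound: cv ≤ v ===== -/

lemma loony_erase {G : Multiset Comp} {p : Comp} (hG : IsSimpleLoony G) :
    IsSimpleLoony (G.erase p) :=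
  fun q hq => hG q (Multiset.mem_of_mem_erase hq)

lemma cv_le_v : ∀ n (G : Multiset Comp), Multiset.card G ≤ n → IsSimpleLoony G →
    cv G ≤ v G := by
  intro n
  induction n with
  | zero =>
    intro G hn _
    have hG : G = 0 := Multiset.card_eq_zero.mp (Nat.le_zero.mp hn)
    subst hG
    simp [cv, fcv_zero, tb_zero, v_zero]
  | succ n ih =>
    intro G hcard hG
    by_cases hne : G = 0
    · subst hne; simp [cv, fcv_zero, tb_zero, v_zero]
    apply le_v hne
    intro p hp
    have hcardE : Multiset.card (G.erase p) = Multiset.card G - 1 :=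
      Multiset.card_erase_of_mem hp
    have hpos : 0 < Multiset.card G := Multiset.card_pos.mpr hne
    have hIH : cv (G.erase p) ≤ v (G.erase p) :=
      ih _ (by omega) (loony_erase hG)
    have hfcv : fcv G = wgt p + fcv (G.erase p) := fcv_erase hp
    cases p with
    | chain c =>
      set H := G.erase (Comp.chain c) with hH
      rw [opt_chain]
      have habs : v H - 2 ≤ |v H - 2| := le_abs_self _
      have hwgt : wgt (Comp.chain c) = c - 4 := rfl
      by_cases hHe : H = 0
      · -- G = {chain c}
        have htb : tb G = 4 := by
          apply tb_four hne
          right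
          intro l hl
          have : Comp.loop l ∈ H := (Multiset.mem_erase_of_ne (by simp)).mpr hl
          rw [hHe] at this; simp at this
        rw [show G.erase (Comp.chain c) = 0 from hHe, v_zero]
        simp only [cv, hfcv, hwgt, htb, hHe, fcv_zero]
        norm_num
      · have htb : tb G ≤ tb H := tb_erase_chain hp hHe
        have : cv H = fcv H + tb H := rfl
        simp only [cv, hfcv, hwgt] at *
        linarith
    | loop l =>
      set H := G.erase (Comp.loop l) with hH
      rw [opt_loop]
      have habs : v H - 4 ≤ |v H - 4| := le_abs_self _
      have habs2 : 4 - v H ≤ |v H - 4| := by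
        rw [abs_sub_comm]; exact le_abs_self _
      have hwgt : wgt (Comp.loop l) = l - 8 := rfl
      have hcvH : cv H = fcv H + tb H := rfl
      by_cases hHe : H = 0
      · -- G = {loop l}
        have hnochain : ∀ c, Comp.chain c ∉ G := by
          intro c hc
          have : Comp.chain c ∈ H := (Multiset.mem_erase_of_ne (by simp)).mpr hc
          rw [hHe] at this; simp at this
        have htb : tb G = 8 := by
          apply tb_eight hne
          · push_neg
            exact ⟨fun c hc hmem => hnochain c hmem, l, hp⟩
          · exact hnochain
        rw [show G.erase (Comp.loop l) = 0 from hHe, v_zero]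
        simp only [cv, hfcv, hwgt, htb, hHe, fcv_zero]
        norm_num
      · by_cases h4 : ∃ c, 4 ≤ c ∧ Comp.chain c ∈ G
        · have htbG : tb G = 4 := tb_four hne (Or.inl h4)
          have htbH : 4 ≤ tb H := tb_ge_four hHe
          simp only [cv, hfcv, hwgt, htbG] at *
          linarith
        · by_cases hcc : ∃ c, Comp.chain c ∈ G
          · have htbG : tb G = 6 := by
              apply tb_six hne
              · push_neg
                exact ⟨fun c hc hmem => absurd ⟨c, hc, hmem⟩ h4, l, hp⟩
              · push_neg; exact hcc
            by_cases hHl : ∃ l', Comp.loop l' ∈ H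
            · obtain ⟨c, hc⟩ := hcc
              have hcH : Comp.chain c ∈ H :=
                (Multiset.mem_erase_of_ne (by simp)).mpr hc
              have htbH : tb H = 6 := by
                apply tb_six hHe
                · push_neg
                  refine ⟨fun c' hc' hmem => absurd ⟨c', hc', Multiset.mem_of_mem_erase hmem⟩ h4, ?_⟩
                  exact hHl
                · push_neg; exact ⟨c, hcH⟩
              simp only [cv, hfcv, hwgt, htbG, htbH] at *
              linarith
            · -- H is all 3-chains
              have hall : ∀ q ∈ H, q = Comp.chain 3 := by
                intro q hq
                cases q with
                | chain c' =>
                  have hc3 : 3 ≤ c' := hG _ (Multiset.mem_of_mem_erase hq)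
                  have : ¬(4 ≤ c') := fun h4' =>
                    h4 ⟨c', h4', Multiset.mem_of_mem_erase hq⟩
                  have : c' = 3 := by omega
                  rw [this]
                | loop l' => exact absurd ⟨l', hq⟩ hHl
              obtain ⟨hv1, hv3⟩ := v_allthree n H (by omega) hall hHe
              have hfH : fcv H = -(Multiset.card H) := fcv_allthree H hall
              have hcardH : (1 : ℤ) ≤ Multiset.card H := by
                have := Multiset.card_pos.mpr hHe
                exact_mod_cast this
              simp only [cv, hfcv, hwgt, htbG]
              have : fcv H ≤ -1 := by rw [hfH]; linarith
              linarith
          · -- no chains at all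
            push_neg at hcc
            have htbG : tb G = 8 := by
              apply tb_eight hne
              · push_neg
                exact ⟨fun c hc hmem => absurd hmem (hcc c), l, hp⟩
              · exact hcc
            have htbH : tb H = 8 := by
              apply tb_eight hHe
              · push_neg
                obtain ⟨q, hq⟩ := Multiset.exists_mem_of_ne_zero hHe
                cases q with
                | chain c' => exact absurd (Multiset.mem_of_mem_erase hq) (hcc c')
                | loop l' =>
                  exact ⟨fun c hc hmem =>
                    absurd (Multiset.mem_of_mem_erase hmem) (hcc c), l', hq⟩
              · exact fun c hc => absurd (Multiset.mem_of_mem_erase hc) (hcc c)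
            simp only [cv, hfcv, hwgt, htbG, htbH] at *
            linarith

/- ===== upper bound helpers ===== -/

lemma open_chain {n : ℕ}
    (ih : ∀ G', Multiset.card G' ≤ n → IsSimpleLoony G' → 2 ≤ cv G' → v G' = cv G')
    {G : Multiset Comp} {c : ℤ} (hG : IsSimpleLoony G)
    (hcard : Multiset.card G ≤ n + 1) (hp : Comp.chain c ∈ G)
    (htb : tb (G.erase (Comp.chain c)) = tb G)
    (hcvH : 2 ≤ cv (G.erase (Comp.chain c))) : v G ≤ cv G := by
  set H := G.erase (Comp.chain c) with hH
  have hpos : 0 < Multiset.card G := Multiset.card_pos.mpr (by rintro rfl; simp at hp)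
  have hcardE : Multiset.card H = Multiset.card G - 1 := Multiset.card_erase_of_mem hp
  have hvH : v H = cv H := ih H (by omega) (loony_erase hG) hcvH
  have hle := v_le_opt hp
  rw [opt_chain] at hle
  rw [← hH] at hle
  have hfcv : fcv G = (c - 4) + fcv H := fcv_erase hp
  have habs : |v H - 2| = v H - 2 := abs_of_nonneg (by rw [hvH]; linarith)
  have hcvH' : cv H = fcv H + tb H := rfl
  have hcvG : cv G = fcv G + tb G := rfl
  linarith

lemma open_loop {n : ℕ}
    (ih : ∀ G', Multiset.card G' ≤ n → IsSimpleLoony G' → 2 ≤ cv G' → v G' = cv G')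
    {G : Multiset Comp} {l : ℤ} (hG : IsSimpleLoony G)
    (hcard : Multiset.card G ≤ n + 1) (hp : Comp.loop l ∈ G)
    (htb : tb (G.erase (Comp.loop l)) = tb G)
    (hcvH : 4 ≤ cv (G.erase (Comp.loop l))) : v G ≤ cv G := by
  set H := G.erase (Comp.loop l) with hH
  have hpos : 0 < Multiset.card G := Multiset.card_pos.mpr (by rintro rfl; simp at hp)
  have hcardE : Multiset.card H = Multiset.card G - 1 := Multiset.card_erase_of_mem hp
  have hvH : v H = cv H := ih H (by omega) (loony_erase hG) (by linarith)
  have hle := v_le_opt hp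
  rw [opt_loop] at hle
  rw [← hH] at hle
  have hfcv : fcv G = (l - 8) + fcv H := fcv_erase hp
  have habs : |v H - 4| = v H - 4 := abs_of_nonneg (by rw [hvH]; linarith)
  have hcvH' : cv H = fcv H + tb H := rfl
  have hcvG : cv G = fcv G + tb G := rfl
  linarith

lemma main_aux : ∀ n (G : Multiset Comp), Multiset.card G ≤ n → IsSimpleLoony G →
    2 ≤ cv G → v G = cv G := by
  intro n
  induction n with
  | zero =>
    intro G hn _ hcv
    have hG0 : G = 0 := Multiset.card_eq_zero.mp (Nat.le_zero.mp hn)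
    subst hG0
    simp [cv, fcv_zero, tb_zero] at hcv
  | succ n ih =>
    intro G hcard hG hcv
    by_cases hne : G = 0
    · subst hne; simp [cv, fcv_zero, tb_zero] at hcv
    have hpos : 0 < Multiset.card G := Multiset.card_pos.mpr hne
    have hcvG : cv G = fcv G + tb G := rfl
    refine le_antisymm ?_ (cv_le_v (n+1) G hcard hG)
    by_cases hl : ∃ l, Comp.loop l ∈ G
    · -- there are loops
      by_cases h3 : Comp.chain 3 ∈ G
      · by_cases hc' : ∃ c, Comp.chain c ∈ G.erase (Comp.chain 3)
        · -- at least two chains, one of them a 3-chain: open the 3-chain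
          obtain ⟨c', hc'mem⟩ := hc'
          obtain ⟨l1, hl1⟩ := hl
          have hHe : G.erase (Comp.chain 3) ≠ 0 := fun h => by simp [h] at hc'mem
          have hl1H : Comp.loop l1 ∈ G.erase (Comp.chain 3) :=
            (Multiset.mem_erase_of_ne (by simp)).mpr hl1
          have htb : tb (G.erase (Comp.chain 3)) = tb G := by
            by_cases hc4 : ∃ c, 4 ≤ c ∧ Comp.chain c ∈ G
            · obtain ⟨c4, hc44, hc4m⟩ := hc4
              have hc4H : Comp.chain c4 ∈ G.erase (Comp.chain 3) :=
                (Multiset.mem_erase_of_ne (by simp; omega)).mpr hc4m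
              rw [tb_four hne (Or.inl ⟨c4, hc44, hc4m⟩),
                tb_four hHe (Or.inl ⟨c4, hc44, hc4H⟩)]
            · rw [tb_six hne
                    (by push_neg; exact ⟨fun c h4 hm => absurd ⟨c, h4, hm⟩ hc4, l1, hl1⟩)
                    (by push_neg; exact ⟨3, h3⟩),
                  tb_six hHe
                    (by push_neg;
                        exact ⟨fun c h4 hm =>
                          absurd ⟨c, h4, Multiset.mem_of_mem_erase hm⟩ hc4, l1, hl1H⟩)
                    (by push_neg; exact ⟨c', hc'mem⟩)]
          have hfcv : fcv G = (3 - 4) + fcv (G.erase (Comp.chain 3)) := fcv_erase h3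
          have hcvH : 2 ≤ cv (G.erase (Comp.chain 3)) := by
            have h2 : cv (G.erase (Comp.chain 3)) =
                fcv (G.erase (Comp.chain 3)) + tb (G.erase (Comp.chain 3)) := rfl
            linarith
          exact open_chain ih hG hcard h3 htb hcvH
        · -- exactly one chain, a 3-chain: open the smallest loop
          have hSne : Set.Nonempty {l : ℤ | Comp.loop l ∈ G} := hl
          have hSbdd : BddBelow {l : ℤ | Comp.loop l ∈ G} :=
            ⟨4, fun l hl' => (hG _ hl').1⟩
          set l0 := sInf {l : ℤ | Comp.loop l ∈ G} with hl0def
          have hp0 : Comp.loop l0 ∈ G := Int.csInf_mem hSne hSbdd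
          have hl0min : ∀ l', Comp.loop l' ∈ G → l0 ≤ l' := fun l' h => csInf_le hSbdd h
          have hl04 : (4:ℤ) ≤ l0 := (hG _ hp0).1
          have hl0even : Even l0 := (hG _ hp0).2
          have h3H : Comp.chain 3 ∈ G.erase (Comp.loop l0) :=
            (Multiset.mem_erase_of_ne (by simp)).mpr h3
          have hHe : G.erase (Comp.loop l0) ≠ 0 := fun h => by simp [h] at h3H
          have hnoc4 : ¬∃ c, 4 ≤ c ∧ Comp.chain c ∈ G := by
            rintro ⟨c, h4c, hcm⟩
            exact hc' ⟨c, (Multiset.mem_erase_of_ne (by simp; omega)).mpr hcm⟩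
          have htbG : tb G = 6 := tb_six hne
            (by push_neg; exact ⟨fun c h4 hm => absurd ⟨c, h4, hm⟩ hnoc4, l0, hp0⟩)
            (by push_neg; exact ⟨3, h3⟩)
          have hfcv : fcv G = (l0 - 8) + fcv (G.erase (Comp.loop l0)) := fcv_erase hp0
          by_cases hHl : ∃ l', Comp.loop l' ∈ G.erase (Comp.loop l0)
          · obtain ⟨l', hl'⟩ := hHl
            have htbH : tb (G.erase (Comp.loop l0)) = 6 := tb_six hHe
              (by push_neg;
                  exact ⟨fun c h4 hm =>
                    absurd ⟨c, h4, Multiset.mem_of_mem_erase hm⟩ hnoc4, l', hl'⟩)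
              (by push_neg; exact ⟨3, h3H⟩)
            have hcvH4 : 4 ≤ cv (G.erase (Comp.loop l0)) := by
              have h2 : cv (G.erase (Comp.loop l0)) = fcv (G.erase (Comp.loop l0)) + 6 := by
                rw [cv, htbH]
              by_cases hl6 : l0 ≤ 6
              · linarith [hcvG, htbG]
              · have h8 : (8:ℤ) ≤ l0 := by
                  obtain ⟨k, hk⟩ := hl0even; omega
                have hfH : fcv (G.erase (Comp.loop l0)) =
                    (3 - 4) + fcv ((G.erase (Comp.loop l0)).erase (Comp.chain 3)) :=
                  fcv_erase h3H
                have hge : 0 ≤ fcv ((G.erase (Comp.loop l0)).erase (Comp.chain 3)) := by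
                  apply fcv_nonneg
                  intro q hq
                  cases q with
                  | chain c =>
                    exfalso
                    apply hc'
                    refine ⟨c, ?_⟩
                    rw [Multiset.erase_comm] at hq
                    exact Multiset.mem_of_mem_erase hq
                  | loop l'' =>
                    have hq' : Comp.loop l'' ∈ G :=
                      Multiset.mem_of_mem_erase (Multiset.mem_of_mem_erase hq)
                    have := hl0min l'' hq'
                    show (0:ℤ) ≤ l'' - 8
                    omega
                linarith
            exact open_loop ih hG hcard hp0 (htbH.trans htbG.symm) hcvH4
          · -- the rest is exactly {chain 3}
            push_neg at hHl
            have hall : ∀ q ∈ G.erase (Comp.loop l0), q = Comp.chain 3 := by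
              intro q hq
              cases q with
              | chain c =>
                have h3c : (3:ℤ) ≤ c := hG _ (Multiset.mem_of_mem_erase hq)
                have hn4 : ¬ (4:ℤ) ≤ c := fun h4 =>
                  hnoc4 ⟨c, h4, Multiset.mem_of_mem_erase hq⟩
                have : c = 3 := by omega
                rw [this]
              | loop l'' => exact absurd hq (hHl l'')
            have hcard1 : Multiset.card (G.erase (Comp.loop l0)) = 1 := by
              by_contra hc1
              have hge1 : (G.erase (Comp.loop l0)).erase (Comp.chain 3) ≠ 0 := by
                intro h0
                have h1 := Multiset.card_erase_of_mem h3H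
                rw [h0] at h1
                simp at h1
                have h2 : 0 < Multiset.card (G.erase (Comp.loop l0)) :=
                  Multiset.card_pos.mpr hHe
                omega
              obtain ⟨q, hq⟩ := Multiset.exists_mem_of_ne_zero hge1
              have hq3 := hall q (Multiset.mem_of_mem_erase hq)
              rw [hq3] at hq
              apply hc'
              refine ⟨3, ?_⟩
              rw [Multiset.erase_comm] at hq
              exact Multiset.mem_of_mem_erase hq
            have hfH : fcv (G.erase (Comp.loop l0)) = -1 := by
              rw [fcv_allthree _ hall, hcard1]
              norm_num
            have htbH4 : tb (G.erase (Comp.loop l0)) = 4 :=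
              tb_four hHe (Or.inr hHl)
            have hcvH3 : cv (G.erase (Comp.loop l0)) = 3 := by
              rw [cv, hfH, htbH4]
              norm_num
            have hcardE : Multiset.card (G.erase (Comp.loop l0)) = Multiset.card G - 1 :=
              Multiset.card_erase_of_mem hp0
            have hvH : v (G.erase (Comp.loop l0)) = 3 := by
              rw [ih _ (by omega) (loony_erase hG) (by rw [hcvH3]; norm_num), hcvH3]
            have hle := v_le_opt hp0
            rw [opt_loop, hvH] at hle
            have habs : |(3:ℤ) - 4| = 1 := by norm_num
            linarith
      · by_cases hc : ∃ c, Comp.chain c ∈ G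
        · -- chains exist, all of length ≥ 4: open the smallest loop
          obtain ⟨c1, hc1⟩ := hc
          have hc14 : (4:ℤ) ≤ c1 := by
            have h3c : (3:ℤ) ≤ c1 := hG _ hc1
            rcases eq_or_lt_of_le h3c with heq | hlt
            · exact absurd (heq ▸ hc1) h3
            · omega
          have hSne : Set.Nonempty {l : ℤ | Comp.loop l ∈ G} := hl
          have hSbdd : BddBelow {l : ℤ | Comp.loop l ∈ G} :=
            ⟨4, fun l hl' => (hG _ hl').1⟩
          set l0 := sInf {l : ℤ | Comp.loop l ∈ G} with hl0def
          have hp0 : Comp.loop l0 ∈ G := Int.csInf_mem hSne hSbdd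
          have hl0min : ∀ l', Comp.loop l' ∈ G → l0 ≤ l' := fun l' h => csInf_le hSbdd h
          have hl04 : (4:ℤ) ≤ l0 := (hG _ hp0).1
          have hl0even : Even l0 := (hG _ hp0).2
          have hc1H : Comp.chain c1 ∈ G.erase (Comp.loop l0) :=
            (Multiset.mem_erase_of_ne (by simp)).mpr hc1
          have hHe : G.erase (Comp.loop l0) ≠ 0 := fun h => by simp [h] at hc1H
          have htbG : tb G = 4 := tb_four hne (Or.inl ⟨c1, hc14, hc1⟩)
          have htbH : tb (G.erase (Comp.loop l0)) = 4 :=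
            tb_four hHe (Or.inl ⟨c1, hc14, hc1H⟩)
          have hfcv : fcv G = (l0 - 8) + fcv (G.erase (Comp.loop l0)) := fcv_erase hp0
          have hcvH4 : 4 ≤ cv (G.erase (Comp.loop l0)) := by
            have h2 : cv (G.erase (Comp.loop l0)) = fcv (G.erase (Comp.loop l0)) + 4 := by
              rw [cv, htbH]
            by_cases hl6 : l0 ≤ 6
            · linarith [hcvG, htbG]
            · have h8 : (8:ℤ) ≤ l0 := by
                obtain ⟨k, hk⟩ := hl0even; omega
              have hge : 0 ≤ fcv (G.erase (Comp.loop l0)) := by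
                apply fcv_nonneg
                intro q hq
                cases q with
                | chain c =>
                  have h3c : (3:ℤ) ≤ c := hG _ (Multiset.mem_of_mem_erase hq)
                  have : c ≠ 3 := by
                    intro h; rw [h] at hq
                    exact h3 (Multiset.mem_of_mem_erase hq)
                  show (0:ℤ) ≤ c - 4
                  omega
                | loop l'' =>
                  have := hl0min l'' (Multiset.mem_of_mem_erase hq)
                  show (0:ℤ) ≤ l'' - 8
                  omega
              linarith
          exact open_loop ih hG hcard hp0 (htbH.trans htbG.symm) hcvH4
        · -- no chains at all: open the smallest loop
          push_neg at hc
          have hSne : Set.Nonempty {l : ℤ | Comp.loop l ∈ G} := hl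
          have hSbdd : BddBelow {l : ℤ | Comp.loop l ∈ G} :=
            ⟨4, fun l hl' => (hG _ hl').1⟩
          set l0 := sInf {l : ℤ | Comp.loop l ∈ G} with hl0def
          have hp0 : Comp.loop l0 ∈ G := Int.csInf_mem hSne hSbdd
          have hl0min : ∀ l', Comp.loop l' ∈ G → l0 ≤ l' := fun l' h => csInf_le hSbdd h
          have hl04 : (4:ℤ) ≤ l0 := (hG _ hp0).1
          have hl0even : Even l0 := (hG _ hp0).2
          have htbG : tb G = 8 := tb_eight hne
            (by push_neg; exact ⟨fun c h4 hm => absurd hm (hc c), l0, hp0⟩) hc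
          have hfcv : fcv G = (l0 - 8) + fcv (G.erase (Comp.loop l0)) := fcv_erase hp0
          by_cases hHe : G.erase (Comp.loop l0) = 0
          · -- G = {loop l0}
            have hle := v_le_opt hp0
            rw [opt_loop, hHe, v_zero] at hle
            have hf0 : fcv (G.erase (Comp.loop l0)) = 0 := by rw [hHe, fcv_zero]
            have habs : |(0:ℤ) - 4| = 4 := by norm_num
            linarith
          · have hnocH : ∀ c, Comp.chain c ∉ G.erase (Comp.loop l0) :=
              fun c hm => hc c (Multiset.mem_of_mem_erase hm)
            have htbH : tb (G.erase (Comp.loop l0)) = 8 := by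
              apply tb_eight hHe _ hnocH
              push_neg
              obtain ⟨q, hq⟩ := Multiset.exists_mem_of_ne_zero hHe
              cases q with
              | chain c => exact absurd hq (hnocH c)
              | loop l' => exact ⟨fun c h4 hm => absurd hm (hnocH c), l', hq⟩
            have hcvH4 : 4 ≤ cv (G.erase (Comp.loop l0)) := by
              have h2 : cv (G.erase (Comp.loop l0)) = fcv (G.erase (Comp.loop l0)) + 8 := by
                rw [cv, htbH]
              by_cases hl6 : l0 ≤ 6
              · linarith [hcvG, htbG]
              · have h8 : (8:ℤ) ≤ l0 := by
                  obtain ⟨k, hk⟩ := hl0even; omega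
                have hge : 0 ≤ fcv (G.erase (Comp.loop l0)) := by
                  apply fcv_nonneg
                  intro q hq
                  cases q with
                  | chain c => exact absurd hq (hnocH c)
                  | loop l'' =>
                    have := hl0min l'' (Multiset.mem_of_mem_erase hq)
                    show (0:ℤ) ≤ l'' - 8
                    omega
                linarith
            exact open_loop ih hG hcard hp0 (htbH.trans htbG.symm) hcvH4
    · -- no loops
      push_neg at hl
      have htbG : tb G = 4 := tb_four hne (Or.inr hl)
      by_cases h3 : Comp.chain 3 ∈ G
      · have hfcv : fcv G = (3 - 4) + fcv (G.erase (Comp.chain 3)) := fcv_erase h3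
        by_cases hHe : G.erase (Comp.chain 3) = 0
        · have hle := v_le_opt h3
          rw [opt_chain, hHe, v_zero] at hle
          have hf0 : fcv (G.erase (Comp.chain 3)) = 0 := by rw [hHe, fcv_zero]
          have habs : |(0:ℤ) - 2| = 2 := by norm_num
          linarith
        · have htbH : tb (G.erase (Comp.chain 3)) = 4 :=
            tb_four hHe (Or.inr fun l hm => hl l (Multiset.mem_of_mem_erase hm))
          have hcvH : 2 ≤ cv (G.erase (Comp.chain 3)) := by
            have h2 : cv (G.erase (Comp.chain 3)) = fcv (G.erase (Comp.chain 3)) + 4 := by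
              rw [cv, htbH]
            linarith [hcvG, htbG]
          exact open_chain ih hG hcard h3 (htbH.trans htbG.symm) hcvH
      · obtain ⟨p, hp⟩ := Multiset.exists_mem_of_ne_zero hne
        cases p with
        | loop l' => exact absurd hp (hl l')
        | chain c =>
          have hc4 : (4:ℤ) ≤ c := by
            have h3c : (3:ℤ) ≤ c := hG _ hp
            have : c ≠ 3 := by
              intro h; rw [h] at hp; exact h3 hp
            omega
          have hfcv : fcv G = (c - 4) + fcv (G.erase (Comp.chain c)) := fcv_erase hp
          by_cases hHe : G.erase (Comp.chain c) = 0
          · have hle := v_le_opt hp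
            rw [opt_chain, hHe, v_zero] at hle
            have hf0 : fcv (G.erase (Comp.chain c)) = 0 := by rw [hHe, fcv_zero]
            have habs : |(0:ℤ) - 2| = 2 := by norm_num
            linarith
          · have htbH : tb (G.erase (Comp.chain c)) = 4 :=
              tb_four hHe (Or.inr fun l hm => hl l (Multiset.mem_of_mem_erase hm))
            have hcvH : 2 ≤ cv (G.erase (Comp.chain c)) := by
              have h2 : cv (G.erase (Comp.chain c)) = fcv (G.erase (Comp.chain c)) + 4 := by
                rw [cv, htbH]
              have hge : 0 ≤ fcv (G.erase (Comp.chain c)) := by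
                apply fcv_nonneg
                intro q hq
                cases q with
                | chain c' =>
                  have h3c : (3:ℤ) ≤ c' := hG _ (Multiset.mem_of_mem_erase hq)
                  have : c' ≠ 3 := by
                    intro h; rw [h] at hq
                    exact h3 (Multiset.mem_of_mem_erase hq)
                  show (0:ℤ) ≤ c' - 4
                  omega
                | loop l'' => exact absurd (Multiset.mem_of_mem_erase hq) (hl l'')
              linarith
            exact open_chain ih hG hcard hp (htbH.trans htbG.symm) hcvH

theorem stmt11 (G : Multiset Comp) (hG : IsSimpleLoony G) (h : 2 ≤ cv G) :
    v G = cv G := main_aux (Multiset.card G) G le_rfl hG h
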